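/- arXiv:1208.6173 — 2 statements merged into one kernel-verified Lean document; each statement's English description precedes it below -/
import Mathlib

section
/- For every h ≥ 1 and k ≥ 0, IT(h,k) + Σ_{s=1}^{h−1} Σ_{t=0}^{k} IT(s,t) · T(h−s, k−t) = T(h,k), where T(h,k) is the number of involutions of {1,…,h} with exactly k inversions and IT(s,t) is the number of irreducible involutions of {1,…,s} with exactly t inversions. -/
/-- The number of inversions of a permutation of `{1,…,h}` (represented as `Fin h`). -/
def invNum {h : ℕ} (π : Equiv.Perm (Fin h)) : ℕ :=
  (Finset.univ.filter fun p : Fin h × Fin h => p.1 < p.2 ∧ π p.2 < π p.1).card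

/-- A permutation of `{1,…,h}` is irreducible if no proper nonempty initial interval
`{1,…,u}` (with `1 ≤ u < h`) is closed under it. -/
def IrredPerm {h : ℕ} (π : Equiv.Perm (Fin h)) : Prop :=
  ¬ ∃ u : ℕ, 0 < u ∧ u < h ∧ ∀ i : Fin h, i.val < u → (π i).val < u

/-- `P(h,k)`: the number of permutations of `{1,…,h}` with exactly `k` inversions. -/
noncomputable def permCount (h k : ℕ) : ℕ :=
  Nat.card {π : Equiv.Perm (Fin h) // invNum π = k}

/-- `I(h,k)`: the number of irreducible permutations of `{1,…,h}` with `k` inversions. -/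
noncomputable def irrCount (h k : ℕ) : ℕ :=
  Nat.card {π : Equiv.Perm (Fin h) // IrredPerm π ∧ invNum π = k}

/-- `T(h,k)`: the number of involutions of `{1,…,h}` with `k` inversions. -/
noncomputable def invoCount (h k : ℕ) : ℕ :=
  Nat.card {π : Equiv.Perm (Fin h) // π * π = 1 ∧ invNum π = k}

/-- `IT(h,k)`: the number of irreducible involutions of `{1,…,h}` with `k` inversions. -/
noncomputable def irrInvoCount (h k : ℕ) : ℕ :=
  Nat.card {π : Equiv.Perm (Fin h) // π * π = 1 ∧ IrredPerm π ∧ invNum π = k}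

/-- A section of a permutation of `{1,…,h}`: a nonempty interval `[u,v]` such that
`[1,u-1]`, `[u,v]` and `[v+1,h]` are all closed under the permutation.
(Here `Fin h` represents `{1,…,h}`, the element `i : Fin h` standing for `i.val + 1`.) -/
def IsSection {h : ℕ} (π : Equiv.Perm (Fin h)) (A : Set (Fin h)) : Prop :=
  ∃ u v : ℕ, u ≤ v ∧ v < h ∧ A = {i : Fin h | u ≤ i.val ∧ i.val ≤ v} ∧
    (∀ i : Fin h, i.val < u → (π i).val < u) ∧
    (∀ i : Fin h, u ≤ i.val → i.val ≤ v → u ≤ (π i).val ∧ (π i).val ≤ v) ∧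
    (∀ i : Fin h, v < i.val → v < (π i).val)

/-- A segment of a permutation: a section that is minimal with respect to inclusion. -/
def IsSegment {h : ℕ} (π : Equiv.Perm (Fin h)) (A : Set (Fin h)) : Prop :=
  IsSection π A ∧ ∀ B, IsSection π B → B ⊆ A → B = A

/-- Two permutations are sectionally inverse or equal: they have the same segments, and on
each segment the first one restricts either to the restriction of the second one or to the
restriction of its inverse. -/
def SIE {h : ℕ} (σ π : Equiv.Perm (Fin h)) : Prop :=
  (∀ A, IsSegment σ A ↔ IsSegment π A) ∧
  ∀ A, IsSegment π A → (∀ i ∈ A, σ i = π i) ∨ (∀ i ∈ A, σ i = π⁻¹ i)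

/-- `B(h,k)`: the number of equivalence classes of the "sectionally inverse or equal"
relation on permutations of `{1,…,h}` consisting of permutations with `k` inversions. -/
noncomputable def bCount (h k : ℕ) : ℕ :=
  Set.ncard {C : Set (Equiv.Perm (Fin h)) | ∃ π, invNum π = k ∧ C = {σ | SIE σ π}}

/-!
Every permutation of `{1,…,h}` is, in a unique way, the direct sum of an irreducible permutation
of its first block `{1,…,s}`, where `s` is the least positive `u` such that `{1,…,u}` is closed,
and an arbitrary permutation of the remaining `h - s` points. Inversions add over a direct sum,
and a direct sum is an involution iff both summands are. Sorting the involutions with `k`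
inversions by `s` and by the number `t` of inversions inside the first block therefore gives
`T(h,k) = ∑_{s=1}^{h} ∑_{t ≤ k} IT(s,t) T(h-s,k-t)`, whose term `s = h` is `IT(h,k)` because
`T(0,m) = [m = 0]`.
-/

open Finset Equiv Perm
open scoped Classical

namespace Equiv.Perm

def blockSum (s n : ℕ) : Perm (Fin s) × Perm (Fin n) →* Perm (Fin (s + n)) :=
  (finSumFinEquiv.permCongrHom : Perm (Fin s ⊕ Fin n) ≃* _).toMonoidHom.comp (sumCongrHom _ _)

variable {s n : ℕ}

theorem blockSum_injective : Function.Injective (blockSum s n) :=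
  finSumFinEquiv.permCongrHom.injective.comp sumCongrHom_injective

@[simp]
theorem blockSum_apply_castAdd (p : Perm (Fin s) × Perm (Fin n)) (i : Fin s) :
    blockSum s n p (Fin.castAdd n i) = Fin.castAdd n (p.1 i) := by
  simp [blockSum, permCongrHom, permCongr_apply]

@[simp]
theorem blockSum_apply_natAdd (p : Perm (Fin s) × Perm (Fin n)) (j : Fin n) :
    blockSum s n p (Fin.natAdd s j) = Fin.natAdd s (p.2 j) := by
  simp [blockSum, permCongrHom, permCongr_apply]

theorem blockSum_mul_self_eq_one_iff (p : Perm (Fin s) × Perm (Fin n)) :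
    blockSum s n p * blockSum s n p = 1 ↔ p.1 * p.1 = 1 ∧ p.2 * p.2 = 1 := by
  rw [← map_mul, ← map_one (blockSum s n), blockSum_injective.eq_iff, Prod.ext_iff]
  rfl

end Equiv.Perm

theorem invNum_eq_sum {h : ℕ} (π : Perm (Fin h)) :
    invNum π = ∑ i, ∑ j, if i < j ∧ π j < π i then 1 else 0 := by
  rw [invNum, card_filter, ← univ_product_univ, sum_product]

theorem invNum_blockSum {s n : ℕ} (p : Perm (Fin s) × Perm (Fin n)) :
    invNum (blockSum s n p) = invNum p.1 + invNum p.2 := by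
  have hcast (a b : Fin s) : Fin.castAdd n a < Fin.castAdd n b ↔ a < b := .rfl
  have hcross (a : Fin s) (b : Fin n) : Fin.castAdd n a < Fin.natAdd s b := by
    rw [Fin.lt_def, Fin.val_castAdd, Fin.val_natAdd]; omega
  simp only [invNum_eq_sum, Fin.sum_univ_add, blockSum_apply_castAdd, blockSum_apply_natAdd,
    hcast, Fin.natAdd_lt_natAdd_iff, hcross, (hcross _ _).not_gt]
  simp

def ClosedBelow {h : ℕ} (π : Perm (Fin h)) (u : ℕ) : Prop :=
  ∀ i : Fin h, i.val < u → (π i).val < u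

theorem exists_closedBelow {h : ℕ} (π : Perm (Fin h)) : ∃ u, 0 < u ∧ ClosedBelow π u :=
  ⟨h + 1, h.succ_pos, fun i _ => (π i).isLt.trans h.lt_succ_self⟩

noncomputable def firstBlock {h : ℕ} (π : Perm (Fin h)) : ℕ :=
  Nat.find (exists_closedBelow π)

theorem firstBlock_eq_iff {h : ℕ} (π : Perm (Fin h)) (u : ℕ) :
    firstBlock π = u ↔ 0 < u ∧ ClosedBelow π u ∧ ∀ v, 0 < v → v < u → ¬ ClosedBelow π v := by
  rw [firstBlock, Nat.find_eq_iff]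
  grind

theorem closedBelow_firstBlock {h : ℕ} (π : Perm (Fin h)) : ClosedBelow π (firstBlock π) :=
  ((firstBlock_eq_iff π _).1 rfl).2.1

theorem firstBlock_mem_Icc {h : ℕ} (hh : 1 ≤ h) (π : Perm (Fin h)) : firstBlock π ∈ Icc 1 h := by
  obtain ⟨hpos, -, hmin⟩ := (firstBlock_eq_iff π _).1 rfl
  exact mem_Icc.2 ⟨hpos, not_lt.1 fun hlt => hmin h hh hlt fun i _ => (π i).isLt⟩

theorem closedBelow_blockSum_iff {s n u : ℕ} (hu : u ≤ s) (p : Perm (Fin s) × Perm (Fin n)) :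
    ClosedBelow (blockSum s n p) u ↔ ClosedBelow p.1 u := by
  constructor
  · intro hc i hi
    simpa using hc (Fin.castAdd n i) hi
  · intro hc i hi
    induction i using Fin.addCases with
    | left i => simpa using hc i hi
    | right j => simp at hi; omega

theorem firstBlock_blockSum_eq_iff {s n : ℕ} (hs : 0 < s) (p : Perm (Fin s) × Perm (Fin n)) :
    firstBlock (blockSum s n p) = s ↔ IrredPerm p.1 := by
  rw [firstBlock_eq_iff, IrredPerm, closedBelow_blockSum_iff le_rfl]
  constructor
  · rintro ⟨-, -, hmin⟩ ⟨u, hu0, hus, hu⟩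
    exact hmin u hu0 hus ((closedBelow_blockSum_iff hus.le p).2 hu)
  · intro hirr
    exact ⟨hs, fun i _ => (p.1 i).isLt,
      fun v hv0 hvs hv => hirr ⟨v, hv0, hvs, (closedBelow_blockSum_iff hvs.le p).1 hv⟩⟩

theorem mem_range_blockSum {s n : ℕ} {π : Perm (Fin (s + n))} (hπ : ClosedBelow π s) :
    π ∈ (blockSum s n).range := by
  have hmaps : Set.MapsTo (finSumFinEquiv.symm.permCongr π) (Set.range Sum.inl)
      (Set.range Sum.inl) := by
    rintro _ ⟨a, rfl⟩
    have hπa : π (Fin.castAdd n a) = Fin.castAdd n ⟨_, hπ _ a.isLt⟩ := rfl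
    refine ⟨⟨_, hπ (Fin.castAdd n a) a.isLt⟩, ?_⟩
    rw [permCongr_apply, symm_symm, finSumFinEquiv_apply_left]
    conv_rhs => rw [hπa, finSumFinEquiv_symm_apply_castAdd]
  obtain ⟨p, hp⟩ := mem_sumCongrHom_range_of_perm_mapsTo_inl hmaps
  refine ⟨p, ?_⟩
  rw [blockSum, MonoidHom.comp_apply, hp, ← permCongr_symm]
  exact finSumFinEquiv.permCongr.apply_symm_apply π

theorem card_filter_product_add_eq {α β : Type*} (A : Finset α) (B : Finset β) (f : α → ℕ)
    (g : β → ℕ) (k : ℕ) :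
    #{p ∈ A ×ˢ B | f p.1 + g p.2 = k} =
      ∑ t ∈ range (k + 1), #{a ∈ A | f a = t} * #{b ∈ B | g b = k - t} := by
  rw [card_eq_sum_card_fiberwise (f := fun p => f p.1) (t := range (k + 1))]
  · refine sum_congr rfl fun t ht => ?_
    have htk : t ≤ k := Nat.lt_succ_iff.1 (mem_range.1 ht)
    rw [← card_product, ← filter_product, filter_filter]
    congr 1
    refine filter_congr fun p _ => ?_
    omega
  · intro p hp
    have hsum := (mem_filter.1 hp).2
    exact mem_range.2 (by simp only; omega)

theorem invoCount_eq_card (h k : ℕ) :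
    invoCount h k = #{π : Perm (Fin h) | π * π = 1 ∧ invNum π = k} := by
  rw [invoCount, Nat.card_eq_fintype_card, Fintype.card_subtype]

theorem irrInvoCount_eq_card (h k : ℕ) :
    irrInvoCount h k = #{π : Perm (Fin h) | π * π = 1 ∧ IrredPerm π ∧ invNum π = k} := by
  rw [irrInvoCount, Nat.card_eq_fintype_card, Fintype.card_subtype]

theorem invoCount_zero_left (k : ℕ) : invoCount 0 k = if k = 0 then 1 else 0 := by
  have hinv (π : Perm (Fin 0)) : invNum π = 0 := by simp [invNum]
  rw [invoCount_eq_card]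
  split_ifs with hk <;> simp [hinv, hk, eq_comm, Subsingleton.elim _ (1 : Perm (Fin 0))]

theorem card_involutions_firstBlock_eq {s : ℕ} (n k : ℕ) (hs : 0 < s) :
    #{π : Perm (Fin (s + n)) | (π * π = 1 ∧ invNum π = k) ∧ firstBlock π = s} =
      ∑ t ∈ range (k + 1), irrInvoCount s t * invoCount n (k - t) := by
  set pairs : Finset (Perm (Fin s) × Perm (Fin n)) :=
    ((univ.filter fun σ => σ * σ = 1 ∧ IrredPerm σ) ×ˢ (univ.filter fun τ => τ * τ = 1)).filter
      fun p => invNum p.1 + invNum p.2 = k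
  have hmem (p : Perm (Fin s) × Perm (Fin n)) :
      ((blockSum s n p * blockSum s n p = 1 ∧ invNum (blockSum s n p) = k) ∧
        firstBlock (blockSum s n p) = s) ↔ p ∈ pairs := by
    simp only [pairs, blockSum_mul_self_eq_one_iff, invNum_blockSum, firstBlock_blockSum_eq_iff hs,
      mem_filter, mem_product, mem_univ, true_and]
    tauto
  have himage :
      ({π : Perm (Fin (s + n)) | (π * π = 1 ∧ invNum π = k) ∧ firstBlock π = s} : Finset _) =
        pairs.map ⟨blockSum s n, blockSum_injective⟩ := by
    ext π
    rw [mem_filter, mem_map]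
    constructor
    · rintro ⟨-, hπ⟩
      obtain ⟨p, rfl⟩ := mem_range_blockSum (hπ.2 ▸ closedBelow_firstBlock π)
      exact ⟨p, (hmem p).1 hπ, rfl⟩
    · rintro ⟨p, hp, rfl⟩
      exact ⟨mem_univ _, (hmem p).2 hp⟩
  rw [himage, card_map, card_filter_product_add_eq]
  refine sum_congr rfl fun t _ => ?_
  rw [irrInvoCount_eq_card, invoCount_eq_card, filter_filter, filter_filter]
  simp only [and_assoc]

theorem invoCount_eq_sum_Icc {h : ℕ} (k : ℕ) (hh : 1 ≤ h) :
    invoCount h k = ∑ s ∈ Icc 1 h, ∑ t ∈ range (k + 1),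
      irrInvoCount s t * invoCount (h - s) (k - t) := by
  rw [invoCount_eq_card, card_eq_sum_card_fiberwise fun π _ => firstBlock_mem_Icc hh π]
  refine sum_congr rfl fun s hs => ?_
  obtain ⟨hs1, n, rfl⟩ : 1 ≤ s ∧ ∃ n, h = s + n :=
    ⟨(mem_Icc.1 hs).1, Nat.exists_eq_add_of_le (mem_Icc.1 hs).2⟩
  rw [filter_filter, Nat.add_sub_cancel_left]
  exact card_involutions_firstBlock_eq n k hs1

theorem sum_irrInvoCount_mul_invoCount_zero (h k : ℕ) :
    ∑ t ∈ range (k + 1), irrInvoCount h t * invoCount 0 (k - t) = irrInvoCount h k := by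
  rw [sum_eq_single_of_mem k (self_mem_range_succ k)]
  · simp [invoCount_zero_left]
  · intro t ht htk
    rw [invoCount_zero_left, if_neg (by grind), mul_zero]

/-- For every `h ≥ 1` and `k ≥ 0`,
`IT(h,k) + Σ_{s=1}^{h−1} Σ_{t=0}^{k} IT(s,t) · T(h−s, k−t) = T(h,k)`. -/
theorem irrInvoCount_recursion (h k : ℕ) (hh : 1 ≤ h) :
    irrInvoCount h k +
      ∑ s ∈ Finset.Icc 1 (h - 1), ∑ t ∈ Finset.range (k + 1),
        irrInvoCount s t * invoCount (h - s) (k - t) = invoCount h k := by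
  obtain ⟨m, rfl⟩ := Nat.exists_eq_add_of_le' hh
  rw [invoCount_eq_sum_Icc k hh, sum_Icc_succ_top hh, Nat.sub_self,
    sum_irrInvoCount_mul_invoCount_zero, Nat.add_sub_cancel, add_comm]
end

section
/- Let h ≥ 0, let π be a permutation of {1,…,h}, and let β be the join of the join-congruences cg(1,π(1)), …, cg(h,π(h)) of the grid K_{h,h}. On the quotient set Q = K_{h,h}/β, the relation [a] ≤ [b] ⟺ (a ⊔ b, b) ∈ β is a well-defined partial order under which Q is a lattice, and this lattice is distributive if and only if π contains no 321 pattern, i.e., there are no indices i < j < k in {1,…,h} with π(i) > π(j) > π(k). -/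
/-!
Call a grid point `(x, y)` closed when the dot `(x, π x)` of the permutation diagram lies weakly
above it and the dot `(π⁻¹ y, y)` weakly to its right. Closed points are stable under meets, so
they are the fixed points of a closure operator `ν`. Both ends of a generating pair of `β` have the
same closure, and a non-closed point lies above the lower but not the upper end of some generating
pair, so joining with the upper end moves it up inside both its `β`-class and its closure. Hence
`β` is the kernel of `ν`, and the quotient is the lattice of closed points, with meet the
componentwise minimum and join the closure of the componentwise maximum.

This lattice is distributive iff `A ⊓ ν (B ⊔ D) ≤ ν (A ⊓ (B ⊔ D))` for closed `A, B, D`. Climb from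
`B ⊔ D` to its closure by generating steps: a step through the column of a right-to-left minimum
`s` keeps `A ⊓ _` below `ν (A ⊓ (B ⊔ D))`, and a step through the column of a left-to-right
maximum cannot occur; row steps are the same after transposing the grid and inverting `π`. When
`π` avoids 321 every entry is one or the other. Conversely, the three dots of a 321 pattern violate
the inequality.
-/

/-- The grid `K_{m,n}`: the lattice `{0,…,m} × {0,…,n}` ordered componentwise
(join and meet are componentwise max and min). -/
abbrev Grid (m n : ℕ) := Fin (m + 1) × Fin (n + 1)

/-- A join-congruence of a join-semilattice: an equivalence relation compatible with
joining a fixed element. -/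
def IsJoinCong {α : Type*} [SemilatticeSup α] (r : α → α → Prop) : Prop :=
  Equivalence r ∧ ∀ a b c : α, r a b → r (a ⊔ c) (b ⊔ c)

/-- The join-congruence generated by a relation `R`: the smallest join-congruence
containing `R` (the intersection of all join-congruences containing `R`). -/
def joinCongGen {α : Type*} [SemilatticeSup α] (R : α → α → Prop) : α → α → Prop :=
  fun a b => ∀ r : α → α → Prop, IsJoinCong r → (∀ x y, R x y → r x y) → r a b

/-- The join of a family of join-congruences: the smallest join-congruence containing
all members of the family. -/
def joinCongSup {α : Type*} [SemilatticeSup α] {ι : Sort*} (f : ι → α → α → Prop) :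
    α → α → Prop :=
  joinCongGen fun a b => ∃ i, f i a b

open Fin.NatCast in
/-- For `1 ≤ i ≤ m` and `1 ≤ j ≤ n`, the join-congruence `cg(i,j)` of the grid `K_{m,n}`
generated by the pairs `((i,j−1),(i,j))` and `((i−1,j),(i,j))`. -/
def cg (m n i j : ℕ) : Grid m n → Grid m n → Prop :=
  joinCongGen fun a b =>
    b = ((i : Fin (m + 1)), (j : Fin (n + 1))) ∧
      (a = ((i : Fin (m + 1)), ((j - 1 : ℕ) : Fin (n + 1))) ∨
        a = (((i - 1 : ℕ) : Fin (m + 1)), (j : Fin (n + 1))))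

section JoinCong

variable {α : Type*} [SemilatticeSup α]

theorem isJoinCong_joinCongGen (R : α → α → Prop) : IsJoinCong (joinCongGen R) :=
  ⟨⟨fun a _ hr _ => hr.1.refl a, fun H r hr hR => hr.1.symm (H r hr hR),
      fun H₁ H₂ r hr hR => hr.1.trans (H₁ r hr hR) (H₂ r hr hR)⟩,
    fun a b c H r hr hR => hr.2 a b c (H r hr hR)⟩

theorem joinCongGen_of {R : α → α → Prop} {a b : α} (hab : R a b) : joinCongGen R a b :=
  fun _ _ hR => hR a b hab

theorem IsJoinCong.joinCongGen_le {R r : α → α → Prop} (hr : IsJoinCong r)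
    (hR : ∀ x y, R x y → r x y) {a b : α} (H : joinCongGen R a b) : r a b :=
  H r hr hR

theorem joinCongSup_joinCongGen {ι : Sort*} (R : ι → α → α → Prop) :
    joinCongSup (fun i => joinCongGen (R i)) = joinCongGen fun a b => ∃ i, R i a b := by
  ext a b
  constructor
  · refine (isJoinCong_joinCongGen _).joinCongGen_le ?_
    rintro x y ⟨i, hi⟩
    exact (isJoinCong_joinCongGen _).joinCongGen_le (fun x y h => joinCongGen_of ⟨i, h⟩) hi
  · refine (isJoinCong_joinCongGen _).joinCongGen_le ?_
    rintro x y ⟨i, hi⟩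
    exact joinCongGen_of ⟨i, joinCongGen_of hi⟩

end JoinCong

namespace ClosureOperator

variable {α : Type*}

section SemilatticeSup

variable [SemilatticeSup α] (c : ClosureOperator α)

def ker (a b : α) : Prop := c a = c b

theorem isJoinCong_ker : IsJoinCong c.ker :=
  ⟨⟨fun _ => rfl, Eq.symm, Eq.trans⟩, fun a b x (hab : c a = c b) => by
    rw [ker, ← closure_sup_closure_left, hab, closure_sup_closure_left]⟩

theorem closure_sup_eq_right_iff {a b : α} : c (a ⊔ b) = c b ↔ a ≤ c b :=
  ⟨fun h => h ▸ le_sup_left.trans (c.le_closure _), fun h =>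
    (c.closure_min (sup_le h (c.le_closure b)) (c.isClosed_closure b)).antisymm
      (c.monotone le_sup_right)⟩

variable {c}

theorem closure_induction [WellFoundedGT α] {R : α → α → Prop}
    (hR : ∀ x y, R x y → c x = c y)
    (hstep : ∀ a, ¬ c.IsClosed a → ∃ x y, R x y ∧ x ≤ a ∧ ¬ y ≤ a)
    {P : α → Prop} {a : α} (ha : P a)
    (hP : ∀ b x y, a ≤ b → b ≤ c a → P b → R x y → x ≤ b → ¬ y ≤ b → P (b ⊔ y)) :
    P (c a) := by
  suffices ∀ b, a ≤ b → b ≤ c a → P b → P (c a) from this a le_rfl (c.le_closure a) ha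
  intro b
  induction b using WellFoundedGT.induction with
  | _ b ih =>
  intro hab hba hb
  by_cases hcl : c.IsClosed b
  · rwa [le_antisymm (c.closure_min hab hcl) hba]
  obtain ⟨x, y, hxy, hxb, hyb⟩ := hstep b hcl
  have hyc : y ≤ c a :=
    calc y ≤ c y := c.le_closure y
      _ = c x := (hR x y hxy).symm
      _ ≤ c a := c.closure_min (hxb.trans hba) (c.isClosed_closure a)
  exact ih (b ⊔ y) (left_lt_sup.2 hyb) (hab.trans le_sup_left) (sup_le hba hyc)
    (hP b x y hab hba hb hxy hxb hyb)

theorem joinCongGen_eq_ker [WellFoundedGT α] {R : α → α → Prop}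
    (hR : ∀ x y, R x y → c x = c y)
    (hstep : ∀ a, ¬ c.IsClosed a → ∃ x y, R x y ∧ x ≤ a ∧ ¬ y ≤ a) :
    joinCongGen R = c.ker := by
  have hgen := isJoinCong_joinCongGen R
  have to_closure (a : α) : joinCongGen R a (c a) := by
    refine closure_induction hR hstep (hgen.1.refl a) fun b x y _ _ hb hxy hxb _ => ?_
    have := hgen.2 x y b (joinCongGen_of hxy)
    rw [sup_eq_right.2 hxb, sup_comm] at this
    exact hgen.1.trans hb this
  ext a b
  refine ⟨c.isJoinCong_ker.joinCongGen_le hR, fun (hab : c a = c b) => ?_⟩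
  exact hgen.1.trans (to_closure a) (hab ▸ hgen.1.symm (to_closure b))

end SemilatticeSup

section Lattice

variable [Lattice α] (c : ClosureOperator α)

instance : Lattice c.Closeds := c.gi.liftLattice

def quotKerEquivCloseds : Quot c.ker ≃ c.Closeds where
  toFun := Quot.lift c.toCloseds fun _ _ h => Subtype.ext h
  invFun x := Quot.mk _ x
  left_inv := Quot.ind fun a => Quot.sound (c.idempotent a)
  right_inv x := Subtype.ext x.2.closure_eq

abbrev quotKerLattice : Lattice (Quot c.ker) := c.quotKerEquivCloseds.lattice

theorem quotKerLattice_le_iff (a b : α) :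
    c.quotKerLattice.le (Quot.mk _ a) (Quot.mk _ b) ↔ c (a ⊔ b) = c b := by
  rw [closure_sup_eq_right_iff, le_closure_iff]
  exact Iff.rfl

theorem quotKerLattice_distrib_iff :
    (∀ x y z : Quot c.ker, c.quotKerLattice.inf x (c.quotKerLattice.sup y z) =
        c.quotKerLattice.sup (c.quotKerLattice.inf x y) (c.quotKerLattice.inf x z)) ↔
      ∀ x y z : c.Closeds, x ⊓ (y ⊔ z) = x ⊓ y ⊔ x ⊓ z := by
  set e := c.quotKerEquivCloseds
  have map_inf (x y) : e (c.quotKerLattice.inf x y) = e x ⊓ e y := e.apply_symm_apply _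
  have map_sup (x y) : e (c.quotKerLattice.sup x y) = e x ⊔ e y := e.apply_symm_apply _
  refine e.forall_congr fun {x} => e.forall_congr fun {y} => e.forall_congr fun {z} => ?_
  rw [← e.injective.eq_iff, map_inf, map_sup, map_sup, map_inf, map_inf]

theorem closeds_distrib_iff {α : Type*} [DistribLattice α] (c : ClosureOperator α) :
    (∀ x y z : c.Closeds, x ⊓ (y ⊔ z) = x ⊓ y ⊔ x ⊓ z) ↔
      ∀ a b d, c.IsClosed a → c.IsClosed b → c.IsClosed d → a ⊓ c (b ⊔ d) ≤ c (a ⊓ (b ⊔ d)) := by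
  constructor
  · intro H a b d ha hb hd
    have : a ⊓ c (b ⊔ d) = c (a ⊓ b ⊔ a ⊓ d) := congrArg Subtype.val (H ⟨a, ha⟩ ⟨b, hb⟩ ⟨d, hd⟩)
    rw [this, inf_sup_left]
  · intro H x y z
    apply Subtype.ext
    change x.1 ⊓ c (y.1 ⊔ z.1) = c (x.1 ⊓ y.1 ⊔ x.1 ⊓ z.1)
    rw [← inf_sup_left]
    refine le_antisymm (H _ _ _ x.2 y.2 z.2) ?_
    exact le_inf (c.closure_min inf_le_left x.2) (c.monotone inf_le_right)

end Lattice

end ClosureOperator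

namespace Grid

variable {h : ℕ} (π : Equiv.Perm (Fin h))

def ColBounded (p : Grid h h) : Prop :=
  ∀ s : Fin h, s.castSucc = p.1 → p.2 ≤ (π s).castSucc

def IsPermClosed (p : Grid h h) : Prop :=
  ColBounded π p ∧ ColBounded π.symm p.swap

theorem isPermClosed_symm_swap {p : Grid h h} : IsPermClosed π.symm p.swap ↔ IsPermClosed π p :=
  and_comm

theorem colBounded_sInf {S : Set (Grid h h)} (hS : ∀ p ∈ S, ColBounded π p) :
    ColBounded π (sInf S) := by
  intro s hs
  rcases S.eq_empty_or_nonempty with rfl | hne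
  · simp [Fin.top_eq_last, Fin.castSucc_ne_last] at hs
  obtain ⟨p, hp, hp1⟩ : (sInf S).1 ∈ Prod.fst '' S := by
    rw [Prod.fst_sInf]
    exact (hne.image _).csInf_mem (Set.toFinite _)
  exact (sInf_le hp).2.trans (hS p hp s (hs.trans hp1.symm))

theorem isPermClosed_sInf {S : Set (Grid h h)} (hS : ∀ p ∈ S, IsPermClosed π p) :
    IsPermClosed π (sInf S) := by
  refine ⟨colBounded_sInf π fun p hp => (hS p hp).1, ?_⟩
  have : (sInf S).swap = sInf (Prod.swap '' S) := by
    ext <;> simp [Prod.fst_sInf, Prod.snd_sInf, Set.image_image]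
  rw [this]
  exact colBounded_sInf π.symm (Set.forall_mem_image.2 fun p hp => (hS p hp).2)

noncomputable def permClosure : ClosureOperator (Grid h h) :=
  ClosureOperator.ofCompletePred (IsPermClosed π) fun _ => isPermClosed_sInf π

theorem permClosure_symm_swap (p : Grid h h) :
    permClosure π.symm p.swap = (permClosure π p).swap := by
  have : permClosure π.symm = (permClosure π).conjBy OrderIso.prodComm :=
    ClosureOperator.ext_isClosed _ _ fun q => isPermClosed_symm_swap π (p := q.swap)
  rw [this]
  rfl

def dot (s : Fin h) : Grid h h := (s.castSucc, (π s).castSucc)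

def cellTop (s : Fin h) : Grid h h := (s.succ, (π s).succ)

def belowTop (s : Fin h) : Grid h h := (s.succ, (π s).castSucc)

def leftOfTop (s : Fin h) : Grid h h := (s.castSucc, (π s).succ)

def GenRel (x y : Grid h h) : Prop :=
  ∃ s, y = cellTop π s ∧ (x = belowTop π s ∨ x = leftOfTop π s)

open Fin.NatCast in
theorem joinCongSup_cg_eq :
    joinCongSup (fun s : Fin h => cg h h (s.val + 1) ((π s).val + 1)) = joinCongGen (GenRel π) := by
  rw [show (fun s : Fin h => cg h h (s.val + 1) ((π s).val + 1)) = fun s => joinCongGen _ from rfl,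
    joinCongSup_joinCongGen]
  congr! 5 with x y s
  have succ_eq (t : Fin h) : ((t.val + 1 : ℕ) : Fin (h + 1)) = t.succ := by ext; simp
  have castSucc_eq (t : Fin h) : ((t.val : ℕ) : Fin (h + 1)) = t.castSucc := by ext; simp
  simp only [Nat.add_sub_cancel, succ_eq, castSucc_eq]
  rfl

theorem belowTop_swap (s : Fin h) : (belowTop π s).swap = leftOfTop π.symm (π s) := by
  simp [belowTop, leftOfTop]

theorem cellTop_swap (s : Fin h) : (cellTop π s).swap = cellTop π.symm (π s) := by
  simp [cellTop]

theorem cellTop_le_of_leftOfTop_le {M : Grid h h} (hM : IsPermClosed π M) {s : Fin h}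
    (hs : leftOfTop π s ≤ M) : cellTop π s ≤ M := by
  refine ⟨?_, hs.2⟩
  rcases hs.1.lt_or_eq with hlt | heq
  · exact Fin.castSucc_lt_iff_succ_le.1 hlt
  · exact absurd (hM.1 s heq) (not_le.2 (Fin.castSucc_lt_iff_succ_le.2 hs.2))

theorem cellTop_le_of_belowTop_le {M : Grid h h} (hM : IsPermClosed π M) {s : Fin h}
    (hs : belowTop π s ≤ M) : cellTop π s ≤ M := by
  rw [← Prod.swap_le_swap, cellTop_swap]
  exact cellTop_le_of_leftOfTop_le π.symm ((isPermClosed_symm_swap π).2 hM)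
    (by rwa [← belowTop_swap, Prod.swap_le_swap])

theorem permClosure_eq_of_genRel {x y : Grid h h} (hxy : GenRel π x y) :
    permClosure π x = permClosure π y := by
  obtain ⟨s, rfl, hx⟩ := hxy
  have hclosed : IsPermClosed π (permClosure π x) := (permClosure π).isClosed_closure x
  have hx_le : x ≤ cellTop π s := by
    rcases hx with rfl | rfl
    · exact ⟨le_rfl, Fin.castSucc_lt_succ.le⟩
    · exact ⟨Fin.castSucc_lt_succ.le, le_rfl⟩
  refine le_antisymm ((permClosure π).monotone hx_le)
    ((permClosure π).closure_min ?_ ((permClosure π).isClosed_closure x))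
  rcases hx with rfl | rfl
  · exact cellTop_le_of_belowTop_le π hclosed ((permClosure π).le_closure _)
  · exact cellTop_le_of_leftOfTop_le π hclosed ((permClosure π).le_closure _)

theorem exists_leftOfTop_of_not_colBounded {a : Grid h h} (ha : ¬ColBounded π a) :
    ∃ s, leftOfTop π s ≤ a ∧ ¬cellTop π s ≤ a := by
  simp only [ColBounded, not_forall, not_le] at ha
  obtain ⟨s, hs, hlt⟩ := ha
  refine ⟨s, ⟨hs.le, Fin.castSucc_lt_iff_succ_le.1 hlt⟩, fun htop => ?_⟩
  have := htop.1
  rw [← hs] at this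
  exact this.not_gt Fin.castSucc_lt_succ

theorem exists_genRel_of_not_isPermClosed {a : Grid h h} (ha : ¬IsPermClosed π a) :
    ∃ x y, GenRel π x y ∧ x ≤ a ∧ ¬y ≤ a := by
  rcases not_and_or.1 ha with ha | ha
  · obtain ⟨s, hx, hy⟩ := exists_leftOfTop_of_not_colBounded π ha
    exact ⟨_, _, ⟨s, rfl, Or.inr rfl⟩, hx, hy⟩
  · obtain ⟨t, hx, hy⟩ := exists_leftOfTop_of_not_colBounded π.symm ha
    refine ⟨_, _, ⟨π.symm t, rfl, Or.inl rfl⟩, ?_, ?_⟩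
    · rwa [← Prod.swap_le_swap, belowTop_swap, Equiv.apply_symm_apply]
    · rwa [← Prod.swap_le_swap, cellTop_swap, Equiv.apply_symm_apply]

theorem joinCongGen_genRel_eq_ker : joinCongGen (GenRel π) = (permClosure π).ker :=
  ClosureOperator.joinCongGen_eq_ker (fun _ _ => permClosure_eq_of_genRel π)
    fun _ ha => exists_genRel_of_not_isPermClosed π ha

theorem isPermClosed_dot (s : Fin h) : IsPermClosed π (dot π s) := by
  refine ⟨fun t ht => ?_, fun t ht => ?_⟩
  · rw [Fin.castSucc_injective _ ht]
    rfl
  · obtain rfl : t = π s := Fin.castSucc_injective _ ht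
    simp [dot]

def Avoids321 : Prop :=
  ¬∃ i j k : Fin h, i < j ∧ j < k ∧ π k < π j ∧ π j < π i

variable {π}

theorem Avoids321.symm (hπ : Avoids321 π) : Avoids321 π.symm := by
  rintro ⟨i, j, k, hij, hjk, hkj, hji⟩
  exact hπ ⟨π.symm k, π.symm j, π.symm i, hkj, hji, by simpa using hij, by simpa using hjk⟩

theorem Avoids321.forall_lt_or_forall_gt (hπ : Avoids321 π) (s : Fin h) :
    (∀ a < s, π a < π s) ∨ ∀ u, s < u → π s < π u := by
  by_contra! H
  obtain ⟨⟨a, has, hsa⟩, ⟨u, hsu, hus⟩⟩ := H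
  exact hπ ⟨a, s, u, has, hsu, hus.lt_of_ne (π.injective.ne hsu.ne'),
    hsa.lt_of_ne (π.injective.ne has.ne')⟩

theorem exists_lt_of_isPermClosed {E : Grid h h} (hE : IsPermClosed π E) {s : Fin h}
    (hE1 : E.1 ≤ s.castSucc) (hE2 : (π s).castSucc < E.2) : ∃ a < s, π s < π a := by
  obtain ⟨a, ha⟩ := Fin.exists_castSucc_eq.2 (hE1.trans_lt (Fin.castSucc_lt_last s)).ne
  have hsa : π s < π a := Fin.castSucc_lt_castSucc_iff.1 (hE2.trans_le (hE.1 a ha))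
  have has : a ≤ s := Fin.castSucc_le_castSucc_iff.1 (ha ▸ hE1)
  exact ⟨a, has.lt_of_ne fun h => (h ▸ hsa).false, hsa⟩

theorem exists_gt_of_isPermClosed {E : Grid h h} (hE : IsPermClosed π E) {s : Fin h}
    (hE1 : s.castSucc < E.1) (hE2 : E.2 ≤ (π s).castSucc) : ∃ u, s < u ∧ π u < π s := by
  obtain ⟨a, has, hsa⟩ := exists_lt_of_isPermClosed ((isPermClosed_symm_swap π).2 hE)
    (s := π s) hE2 (by simpa using hE1)
  exact ⟨π.symm a, by simpa using hsa, by simpa using has⟩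

theorem inf_cellTop_le_of_forall_gt {A W : Grid h h} (hA : IsPermClosed π A) {s : Fin h}
    (hs : ∀ u, s < u → π s < π u) (hW1 : W.1 = s.castSucc) (hW2 : (π s).castSucc < W.2) :
    A ⊓ cellTop π s ≤ permClosure π (A ⊓ W) := by
  set M := permClosure π (A ⊓ W)
  have hM : IsPermClosed π M := (permClosure π).isClosed_closure _
  have hAW : A ⊓ W ≤ M := (permClosure π).le_closure _
  refine ⟨?_, (inf_le_inf_left A.2 (Fin.castSucc_lt_iff_succ_le.1 hW2)).trans hAW.2⟩
  by_cases hA1 : A.1 ≤ s.castSucc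
  · exact inf_le_left.trans ((le_inf le_rfl (hW1 ▸ hA1)).trans hAW.1)
  have hsM : s.castSucc < M.1 := by
    refine ((le_inf (not_le.1 hA1).le hW1.ge).trans hAW.1).lt_of_ne fun hMs => ?_
    have hA2 : A.2 ≤ (π s).castSucc := by
      rcases inf_le_iff.1 (hAW.2.trans (hM.1 s hMs)) with hA2 | hW2'
      · exact hA2
      · exact absurd hW2' hW2.not_ge
    obtain ⟨u, hsu, hus⟩ := exists_gt_of_isPermClosed hA (not_le.1 hA1) hA2
    exact (hs u hsu).not_gt hus
  exact inf_le_of_right_le (Fin.castSucc_lt_iff_succ_le.1 hsM)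

theorem exists_lt_of_le_permClosure {B D W : Grid h h} (hB : IsPermClosed π B)
    (hD : IsPermClosed π D) (hBDW : B ⊔ D ≤ W) (hWBD : W ≤ permClosure π (B ⊔ D)) {s : Fin h}
    (hW1 : W.1 = s.castSucc) (hW2 : (π s).castSucc < W.2) : ∃ a < s, π s < π a := by
  by_cases hBD : (B ⊔ D).2 ≤ (π s).castSucc
  · have hdot : permClosure π (B ⊔ D) ≤ dot π s :=
      (permClosure π).closure_min ⟨hBDW.1.trans hW1.le, hBD⟩ (isPermClosed_dot π s)
    exact absurd (hWBD.trans hdot).2 hW2.not_ge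
  rcases lt_sup_iff.1 (not_le.1 hBD) with hB2 | hD2
  · exact exists_lt_of_isPermClosed hB (le_sup_left.trans (hBDW.1.trans hW1.le)) hB2
  · exact exists_lt_of_isPermClosed hD (le_sup_right.trans (hBDW.1.trans hW1.le)) hD2

theorem inf_cellTop_le_of_leftOfTop_le (hπ : Avoids321 π) {A B D W : Grid h h}
    (hA : IsPermClosed π A) (hB : IsPermClosed π B) (hD : IsPermClosed π D)
    (hBDW : B ⊔ D ≤ W) (hWBD : W ≤ permClosure π (B ⊔ D)) {s : Fin h}
    (hx : leftOfTop π s ≤ W) (hy : ¬cellTop π s ≤ W) :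
    A ⊓ cellTop π s ≤ permClosure π (A ⊓ W) := by
  have hW1 : W.1 = s.castSucc :=
    (hx.1.lt_or_eq.resolve_left fun hlt => hy ⟨Fin.castSucc_lt_iff_succ_le.1 hlt, hx.2⟩).symm
  have hW2 : (π s).castSucc < W.2 := Fin.castSucc_lt_iff_succ_le.2 hx.2
  rcases hπ.forall_lt_or_forall_gt s with hmax | hmin
  · obtain ⟨a, has, hsa⟩ := exists_lt_of_le_permClosure hB hD hBDW hWBD hW1 hW2
    exact absurd (hmax a has) hsa.not_gt
  · exact inf_cellTop_le_of_forall_gt hA hmin hW1 hW2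

theorem inf_le_permClosure_inf_of_genRel (hπ : Avoids321 π) {A B D W x y : Grid h h}
    (hA : IsPermClosed π A) (hB : IsPermClosed π B) (hD : IsPermClosed π D)
    (hBDW : B ⊔ D ≤ W) (hWBD : W ≤ permClosure π (B ⊔ D))
    (hxy : GenRel π x y) (hx : x ≤ W) (hy : ¬y ≤ W) :
    A ⊓ y ≤ permClosure π (A ⊓ W) := by
  obtain ⟨s, rfl, rfl | rfl⟩ := hxy
  · rw [← Prod.swap_le_swap, Prod.swap_inf, cellTop_swap, ← permClosure_symm_swap, Prod.swap_inf]
    refine inf_cellTop_le_of_leftOfTop_le hπ.symm ((isPermClosed_symm_swap π).2 hA)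
      ((isPermClosed_symm_swap π).2 hB) ((isPermClosed_symm_swap π).2 hD) ?_ ?_ ?_ ?_
    · rwa [← Prod.swap_sup, Prod.swap_le_swap]
    · rwa [← Prod.swap_sup, permClosure_symm_swap, Prod.swap_le_swap]
    · rwa [← belowTop_swap, Prod.swap_le_swap]
    · rwa [← cellTop_swap, Prod.swap_le_swap]
  · exact inf_cellTop_le_of_leftOfTop_le hπ hA hB hD hBDW hWBD hx hy

theorem inf_permClosure_sup_le (hπ : Avoids321 π) {A B D : Grid h h}
    (hA : IsPermClosed π A) (hB : IsPermClosed π B) (hD : IsPermClosed π D) :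
    A ⊓ permClosure π (B ⊔ D) ≤ permClosure π (A ⊓ (B ⊔ D)) := by
  refine ClosureOperator.closure_induction (P := fun W => A ⊓ W ≤ permClosure π (A ⊓ (B ⊔ D)))
    (fun _ _ => permClosure_eq_of_genRel π) (fun _ => exists_genRel_of_not_isPermClosed π)
    ((permClosure π).le_closure _) fun W x y hBDW hWBD hW hxy hx hy => ?_
  rw [inf_sup_left]
  refine sup_le hW ((inf_le_permClosure_inf_of_genRel hπ hA hB hD hBDW hWBD hxy hx hy).trans ?_)
  exact (permClosure π).closure_min hW ((permClosure π).isClosed_closure _)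

theorem exists_not_inf_permClosure_sup_le (h321 : ¬Avoids321 π) :
    ∃ A B D, IsPermClosed π A ∧ IsPermClosed π B ∧ IsPermClosed π D ∧
      ¬A ⊓ permClosure π (B ⊔ D) ≤ permClosure π (A ⊓ (B ⊔ D)) := by
  obtain ⟨i, j, k, hij, hjk, hkj, hji⟩ := not_not.1 h321
  refine ⟨dot π i, dot π j, dot π k, isPermClosed_dot π i, isPermClosed_dot π j,
    isPermClosed_dot π k, fun H => ?_⟩
  have hQ : IsPermClosed π (i.castSucc, (π j).castSucc) := by
    refine ⟨fun t ht => ?_, fun t ht => ?_⟩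
    · obtain rfl := Fin.castSucc_injective _ ht
      exact Fin.castSucc_le_castSucc_iff.2 hji.le
    · obtain rfl := Fin.castSucc_injective _ ht
      simpa using hij.le
  have hle : dot π i ⊓ (dot π j ⊔ dot π k) ≤ (i.castSucc, (π j).castSucc) :=
    ⟨inf_le_left, inf_le_of_right_le (sup_le le_rfl (Fin.castSucc_le_castSucc_iff.2 hkj.le))⟩
  have hbelow : belowTop π j ≤ dot π j ⊔ dot π k :=
    ⟨le_sup_of_le_right (Fin.succ_le_castSucc_iff.2 hjk), le_sup_left⟩
  have htop : cellTop π j ≤ permClosure π (dot π j ⊔ dot π k) :=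
    cellTop_le_of_belowTop_le π ((permClosure π).isClosed_closure _)
      (hbelow.trans ((permClosure π).le_closure _))
  have := ((inf_le_inf_left _ htop).trans (H.trans ((permClosure π).closure_min hle hQ))).2
  exact this.not_gt (lt_inf_iff.2 ⟨Fin.castSucc_lt_castSucc_iff.2 hji, Fin.castSucc_lt_succ⟩)

theorem forall_inf_permClosure_sup_le_iff :
    (∀ A B D, IsPermClosed π A → IsPermClosed π B → IsPermClosed π D →
      A ⊓ permClosure π (B ⊔ D) ≤ permClosure π (A ⊓ (B ⊔ D))) ↔ Avoids321 π := by
  refine ⟨fun H => ?_, fun hπ _ _ _ => inf_permClosure_sup_le hπ⟩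
  by_contra h321
  obtain ⟨A, B, D, hA, hB, hD, hne⟩ := exists_not_inf_permClosure_sup_le h321
  exact hne (H A B D hA hB hD)

end Grid

/-- Let `π` be a permutation of `{1,…,h}` and let `β` be the join of the
join-congruences `cg(i, π(i))` of the grid `K_{h,h}`.  Then `β` is an equivalence
relation, the relation `[a] ≤ [b] ↔ β (a ⊔ b) b` is a well-defined partial order making
the quotient a lattice (i.e. there is a lattice structure on the quotient whose order is
given by this rule), and this lattice is distributive if and only if `π` contains no
321 pattern. -/
theorem grid_quotient_distrib_iff_no321 (h : ℕ) (π : Equiv.Perm (Fin h))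
    (β : Grid h h → Grid h h → Prop)
    (hβ : β = joinCongSup fun s : Fin h => cg h h (s.val + 1) ((π s).val + 1)) :
    Equivalence β ∧
    ∃ L : Lattice (Quot β),
      (∀ a b : Grid h h, L.le (Quot.mk β a) (Quot.mk β b) ↔ β (a ⊔ b) b) ∧
      ((∀ x y z : Quot β, L.inf x (L.sup y z) = L.sup (L.inf x y) (L.inf x z)) ↔
        ¬ ∃ i j k : Fin h, i < j ∧ j < k ∧ π k < π j ∧ π j < π i) := by
  subst hβ
  rw [Grid.joinCongSup_cg_eq, Grid.joinCongGen_genRel_eq_ker]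
  refine ⟨(Grid.permClosure π).isJoinCong_ker.1, (Grid.permClosure π).quotKerLattice,
    (Grid.permClosure π).quotKerLattice_le_iff, ?_⟩
  rw [ClosureOperator.quotKerLattice_distrib_iff, ClosureOperator.closeds_distrib_iff]
  exact Grid.forall_inf_permClosure_sup_le_iff
end
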